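/- Let G=(V,E) be a finite graph with nonnegative vertex weights w. Let δ: E → ℝ≥0 be G-valid, i.e., for every vertex v, the sum of δ(e) over edges e incident to v is at most w(v). Define w̃(v) = Σ_{e ∋ v} δ(e). Fix ε' ∈ (0,1) and let S = {v ∈ V : w(v) − w̃(v) ≤ ε'·w(v)}. Then for any vertex cover C of G, Σ_{v ∈ S} w(v) ≤ (2/(1−ε')) · Σ_{v ∈ C} w(v). -/
import Mathlib


theorem stmt0 {V : Type*} [Fintype V] [DecidableEq V] (G : SimpleGraph V)
    [DecidableRel G.Adj]
    (w : V → ℝ) (hw : ∀ v, 0 ≤ w v)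
    (δ : Sym2 V → ℝ) (hδ : ∀ e, 0 ≤ δ e)
    (hvalid : ∀ v : V, ∑ e ∈ G.edgeFinset.filter (fun e => v ∈ e), δ e ≤ w v)
    (ε' : ℝ) (hε : ε' ∈ Set.Ioo (0:ℝ) 1)
    (C : Finset V) (hC : ∀ ⦃u v : V⦄, G.Adj u v → u ∈ C ∨ v ∈ C) :
    ∑ v ∈ Finset.univ.filter (fun v =>
        w v - (∑ e ∈ G.edgeFinset.filter (fun e => v ∈ e), δ e) ≤ ε' * w v), w v
      ≤ (2 / (1 - ε')) * ∑ v ∈ C, w v := by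
  obtain ⟨hε0, hε1⟩ := hε
  set Wt : V → ℝ := fun v => ∑ e ∈ G.edgeFinset.filter (fun e => v ∈ e), δ e with hWt
  set S : Finset V := Finset.univ.filter (fun v => w v - Wt v ≤ ε' * w v) with hS
  have key : ∀ A : Finset V, ∑ v ∈ A, Wt v
      = ∑ e ∈ G.edgeFinset, ((A.filter (fun v => v ∈ e)).card : ℝ) * δ e := by
    intro A
    simp only [hWt, Finset.sum_filter]
    rw [Finset.sum_comm]
    refine Finset.sum_congr rfl fun e he => ?_
    rw [← Finset.sum_filter, Finset.sum_const, nsmul_eq_mul]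
  have hWtnn : ∀ v, 0 ≤ Wt v := fun v =>
    Finset.sum_nonneg fun e _ => hδ e
  have h1 : (1 - ε') * ∑ v ∈ S, w v ≤ ∑ v ∈ S, Wt v := by
    rw [Finset.mul_sum]
    refine Finset.sum_le_sum fun v hv => ?_
    have := (Finset.mem_filter.mp hv).2
    nlinarith
  have h2 : ∑ v ∈ S, Wt v ≤ ∑ v ∈ (Finset.univ : Finset V), Wt v :=
    Finset.sum_le_sum_of_subset_of_nonneg (Finset.subset_univ S)
      (fun v _ _ => hWtnn v)
  have h3 : ∑ v ∈ (Finset.univ : Finset V), Wt v = 2 * ∑ e ∈ G.edgeFinset, δ e := by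
    rw [key, Finset.mul_sum]
    refine Finset.sum_congr rfl fun e he => ?_
    have hnd : ¬ e.IsDiag := G.not_isDiag_of_mem_edgeSet (SimpleGraph.mem_edgeFinset.mp he)
    induction e with
    | h a b =>
      have hab : a ≠ b := by simpa using hnd
      have : Finset.univ.filter (fun v => v ∈ s(a, b)) = {a, b} := by
        ext v; simp [Sym2.mem_iff]
      rw [this, Finset.card_insert_of_notMem (by simp [hab]), Finset.card_singleton]
      norm_num
  have h4 : ∑ e ∈ G.edgeFinset, δ e ≤ ∑ v ∈ C, Wt v := by
    rw [key]
    refine Finset.sum_le_sum fun e he => ?_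
    have hcard : 1 ≤ (C.filter (fun v => v ∈ e)).card := by
      refine Finset.card_pos.mpr ?_
      induction e with
      | h a b =>
        have hadj : G.Adj a b := SimpleGraph.mem_edgeFinset.mp he
        rcases hC hadj with h | h
        · exact ⟨a, Finset.mem_filter.mpr ⟨h, by simp⟩⟩
        · exact ⟨b, Finset.mem_filter.mpr ⟨h, by simp⟩⟩
    have : (1 : ℝ) ≤ ((C.filter (fun v => v ∈ e)).card : ℝ) := by exact_mod_cast hcard
    nlinarith [hδ e]
  have h5 : ∑ v ∈ C, Wt v ≤ ∑ v ∈ C, w v :=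
    Finset.sum_le_sum fun v _ => hvalid v
  have hmain : (1 - ε') * ∑ v ∈ S, w v ≤ 2 * ∑ v ∈ C, w v := by linarith
  have hpos : 0 < 1 - ε' := by linarith
  rw [div_mul_eq_mul_div, le_div_iff₀ hpos]
  linarith
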